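/- arXiv:2212.14239 — 7 statements merged into one kernel-verified Lean document; each statement's English description precedes it below -/
import Mathlib

section
/- The semigroup B(X,P) is regular: for every f in B(X,P) there exists g in B(X,P) such that fgf = f, i.e. f(g(f(x))) = f(x) for all x in X. -/
open Cardinal

/-- `P : I → Set X` is a partition of `X`: blocks are nonempty, pairwise disjoint,
and cover `X`. -/
def IsPartition {X I : Type*} (P : I → Set X) : Prop :=
  (∀ i, (P i).Nonempty) ∧ Pairwise (Function.onFun Disjoint P) ∧ ∀ x, ∃ i, x ∈ P i

/-- `f` belongs to `B(X,P)` with character `χ`: `f` maps each block `P i` into the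
block `P (χ i)`, and `χ` is a bijection of the index set. -/
def MemB {X I : Type*} (P : I → Set X) (f : X → X) (χ : I → I) : Prop :=
  (∀ i, Set.MapsTo f (P i) (P (χ i))) ∧ Function.Bijective χ

/-!
An inner inverse `g` of `f` is built pointwise. If `x ∈ P i` then `f x ∈ P (χ i)`, so sending each
point `f x` of the image back to such an `x` maps `P (χ i)` into `P i`; every other point of a block
`P j` goes to an arbitrary point of `P (χ⁻¹ j)`. Thus `g` preserves the partition with the bijective
character `χ⁻¹`, and `f (g (f x)) = f x` by construction.
-/

open Function Set

theorem eq_of_mem_of_pairwise_disjoint {X I : Type*} {Q : I → Set X}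
    (hQ : Pairwise (Disjoint on Q)) {y : X} {i j : I} (hi : y ∈ Q i) (hj : y ∈ Q j) : i = j :=
  hQ.eq (not_disjoint_iff.2 ⟨y, hi, hj⟩)

section InnerInverse

variable {X Y I J : Type*} {P : I → Set X} {Q : J → Set Y} {f : X → Y} {χ : I → J} {ψ : J → I}

theorem exists_mem_block_and_eq_of_mem_range (hP : IsPartition P) (hQ : IsPartition Q)
    (hf : ∀ i, MapsTo f (P i) (Q (χ i))) (hψ : LeftInverse ψ χ) (y : Y) :
    ∃ x, (∀ j, y ∈ Q j → x ∈ P (ψ j)) ∧ (y ∈ range f → f x = y) := by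
  obtain ⟨hPne, -, hPcov⟩ := hP
  obtain ⟨-, hQdisj, hQcov⟩ := hQ
  by_cases hy : y ∈ range f
  · obtain ⟨x, rfl⟩ := hy
    obtain ⟨i, hx⟩ := hPcov x
    refine ⟨x, fun j hj => ?_, fun _ => rfl⟩
    rwa [← eq_of_mem_of_pairwise_disjoint hQdisj (hf i hx) hj, hψ]
  · obtain ⟨j, hj⟩ := hQcov y
    obtain ⟨x, hx⟩ := hPne (ψ j)
    refine ⟨x, fun j' hj' => ?_, fun h => absurd h hy⟩
    rwa [← eq_of_mem_of_pairwise_disjoint hQdisj hj hj']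

theorem exists_innerInverse_mapsTo (hP : IsPartition P) (hQ : IsPartition Q)
    (hf : ∀ i, MapsTo f (P i) (Q (χ i))) (hψ : LeftInverse ψ χ) :
    ∃ g : Y → X, (∀ j, MapsTo g (Q j) (P (ψ j))) ∧ ∀ x, f (g (f x)) = f x := by
  choose g hgQ hgf using exists_mem_block_and_eq_of_mem_range hP hQ hf hψ
  exact ⟨g, fun j y hy => hgQ y j hy, fun x => hgf (f x) (mem_range_self x)⟩

end InnerInverse

theorem B_regular_general {X I : Type*} (P : I → Set X) (hP : IsPartition P)
    (f : X → X) (χf : I → I) (hf : MemB P f χf) :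
    ∃ g χg, MemB P g χg ∧ ∀ x, f (g (f x)) = f x := by
  obtain ⟨hmaps, hbij⟩ := hf
  let e := Equiv.ofBijective χf hbij
  obtain ⟨g, hg, hfgf⟩ := exists_innerInverse_mapsTo hP hP hmaps e.symm_apply_apply
  exact ⟨g, e.symm, ⟨hg, e.symm.bijective⟩, hfgf⟩

/-- The semigroup `B(X,P)` is regular. -/
theorem B_regular {X I : Type*} [Nonempty X] (P : I → Set X) (hP : IsPartition P)
    (f : X → X) (χf : I → I) (hf : MemB P f χf) :
    ∃ g χg, MemB P g χg ∧ ∀ x, f (g (f x)) = f x :=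
  B_regular_general P hP f χf hf
end

section
/- Let f be in B(X,P). Then f is unit-regular in B(X,P) (i.e. there exists a unit u of B(X,P) with fuf = f, meaning f(u(f(x))) = f(x) for all x) if and only if for every i in I there exists a transversal T of the kernel of the restriction f|X_i such that |X_i \ T| = |X_{chi_f(i)} \ f(X_i)| (as cardinals). -/
open Cardinal

/-- `u` is a unit of the monoid `B(X,P)`: it lies in `B(X,P)` and has a two-sided
inverse lying in `B(X,P)`. -/
def IsUnitB {X I : Type*} (P : I → Set X) (u : X → X) : Prop :=
  ∃ χu, MemB P u χu ∧ ∃ v χv, MemB P v χv ∧ (∀ x, v (u x) = x) ∧ (∀ x, u (v x) = x)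

/-! A subset `T ⊆ P i` is a transversal of the kernel of `f|P i` exactly when `f` maps `T`
bijectively onto `f(P i)`. If `u` is a unit with `fuf = f`, then `u` maps the block `P (χf i)`
bijectively onto `P i`; it sends `f(P i)` onto such a transversal `T` and the rest of the block
onto `P i \ T`, which gives the cardinal equality. Conversely, the cardinal equality supplies a
bijection `P i \ T ≃ P (χf i) \ f(P i)`, which together with `f : T ≃ f(P i)` is a bijection
`P i ≃ P (χf i)`. Gluing these over all blocks gives a permutation `π` of `X` preserving `P`, and
`u = π⁻¹` satisfies `fuf = f` because `π` agrees with `f` on each transversal. -/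

open Set

universe u

namespace Set

variable {α β : Type*} {f : α → β}

theorem bijOn_image_iff_forall_existsUnique {s r : Set α} (hrs : r ⊆ s) :
    BijOn f r (f '' s) ↔ ∀ x ∈ s, ∃! y, y ∈ r ∧ f y = f x := by
  constructor
  · intro h x hx
    obtain ⟨y, hy, hyx⟩ := h.surjOn (mem_image_of_mem f hx)
    exact ⟨y, ⟨hy, hyx⟩, fun z hz => h.injOn hz.1 hy (hz.2.trans hyx.symm)⟩
  · intro h
    refine ⟨fun y hy => mem_image_of_mem f (hrs hy), fun y hy z hz hyz => ?_, ?_⟩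
    · exact (h z (hrs hz)).unique ⟨hy, hyz⟩ ⟨hz, rfl⟩
    · rintro _ ⟨x, hx, rfl⟩
      obtain ⟨y, ⟨hy, hyx⟩, -⟩ := h x hx
      exact ⟨y, hy, hyx⟩

theorem bijOn_image_of_rightInvOn {g : β → α} {t : Set β} (h : RightInvOn g f t) :
    BijOn f (g '' t) t := by
  refine InvOn.bijOn ⟨h.rightInvOn_image, h⟩ ?_ (mapsTo_image g t)
  rintro _ ⟨y, hy, rfl⟩
  rwa [h hy]

theorem BijOn.exists_equiv_extend {α β : Type u} {f : α → β} {s r : Set α} {t : Set β}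
    (hrs : r ⊆ s) (hf : MapsTo f s t) (hr : BijOn f r (f '' s))
    (hcard : #↥(s \ r) = #↥(t \ f '' s)) :
    ∃ e : s ≃ t, ∀ x (hx : x ∈ r), (e ⟨x, hrs hx⟩ : β) = f x := by
  classical
  obtain ⟨e⟩ := Cardinal.eq.mp hcard
  refine ⟨(Equiv.Set.sumDiffSubset hrs).symm.trans
    (((hr.equiv f).sumCongr e).trans (Equiv.Set.sumDiffSubset hf.image_subset)), fun x hx => ?_⟩
  simp only [Equiv.trans_apply, Equiv.Set.sumDiffSubset_symm_apply_of_mem, hx,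
    Equiv.sumCongr_apply, Sum.map_inl, Equiv.Set.sumDiffSubset_apply_inl, coe_inclusion]
  rfl

theorem mk_sdiff_image_of_image_eq {α β : Type u} {g : β → α} (hg : Function.Injective g)
    {s : Set β} {t : Set α} (hst : g '' s = t) (r : Set β) : #↥(t \ g '' r) = #↥(s \ r) := by
  rw [← hst, ← image_sdiff hg, mk_image_eq hg]

end Set

namespace IsPartition

variable {X I : Type*} {P : I → Set X}

theorem eq_of_mem (hP : IsPartition P) {x : X} {i j : I} (hi : x ∈ P i) (hj : x ∈ P j) :
    i = j := by
  by_contra h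
  exact Set.disjoint_left.mp (hP.2.1 h) hi hj

theorem existsUnique_mem (hP : IsPartition P) (x : X) : ∃! i, x ∈ P i :=
  let ⟨i, hi⟩ := hP.2.2 x
  ⟨i, hi, fun _ hj => hP.eq_of_mem hj hi⟩

theorem exists_equiv_apply_eq {Y J : Type*} {Q : J → Set Y} (hP : IsPartition P)
    (hQ : IsPartition Q) (σ : I ≃ J) (e : ∀ i, P i ≃ Q (σ i)) :
    ∃ π : X ≃ Y, ∀ i x (hx : x ∈ P i), π x = e i ⟨x, hx⟩ := by
  let E := Set.sigmaEquiv P hP.existsUnique_mem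
  refine ⟨E.symm.trans ((Equiv.sigmaCongr σ e).trans (Set.sigmaEquiv Q hQ.existsUnique_mem)),
    fun i x hx => ?_⟩
  have hE : E.symm x = ⟨i, x, hx⟩ := E.symm_apply_eq.mpr rfl
  simp only [Equiv.trans_apply, hE]
  rfl

theorem isUnitB_symm (hP : IsPartition P) (π : X ≃ X) (σ : I ≃ I)
    (h : ∀ i, MapsTo π (P i) (P (σ i))) : IsUnitB P π.symm := by
  refine ⟨σ.symm, ⟨fun j y hy => ?_, σ.symm.bijective⟩, π, σ, ⟨h, σ.bijective⟩,
    π.apply_symm_apply, π.symm_apply_apply⟩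
  obtain ⟨k, hk⟩ := hP.2.2 (π.symm y)
  have hkj : σ k = j := hP.eq_of_mem (by simpa using h k hk) hy
  rwa [← hkj, σ.symm_apply_apply]

theorem image_eq_of_surjective (hP : IsPartition P) {u : X → X} {χu : I → I}
    (hu : MemB P u χu) (hsurj : Function.Surjective u) (j : I) : u '' P j = P (χu j) := by
  refine (hu.1 j).image_subset.antisymm fun z hz => ?_
  obtain ⟨w, rfl⟩ := hsurj z
  obtain ⟨k, hk⟩ := hP.2.2 w
  rw [← hu.2.1 (hP.eq_of_mem (hu.1 k hk) hz)]
  exact mem_image_of_mem u hk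

theorem leftInverse_char_of_inner_inverse (hP : IsPartition P) {f u : X → X} {χf χu : I → I}
    (hf : MemB P f χf) (hu : ∀ j, MapsTo u (P j) (P (χu j))) (hfuf : ∀ x, f (u (f x)) = f x) :
    Function.LeftInverse χu χf := fun i => by
  obtain ⟨x, hx⟩ := hP.1 i
  have hfx : f (u (f x)) ∈ P (χf (χu (χf i))) := hf.1 _ (hu _ (hf.1 i hx))
  rw [hfuf x] at hfx
  exact hf.2.1 (hP.eq_of_mem hfx (hf.1 i hx))

end IsPartition

theorem unit_regular_element_iff_general {X I : Type*} (P : I → Set X)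
    (hP : IsPartition P) (f : X → X) (χf : I → I) (hf : MemB P f χf) :
    (∃ u, IsUnitB P u ∧ ∀ x, f (u (f x)) = f x) ↔
      ∀ i, ∃ T : Set X, T ⊆ P i ∧ (∀ x ∈ P i, ∃! t, t ∈ T ∧ f t = f x) ∧
        Cardinal.mk ↥(P i \ T) = Cardinal.mk ↥(P (χf i) \ f '' (P i)) := by
  constructor
  · rintro ⟨u, ⟨χu, hu, v, -, -, hvu, huv⟩, hfuf⟩ i
    have himage : u '' P (χf i) = P i := by
      rw [hP.image_eq_of_surjective hu (Function.LeftInverse.surjective huv),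
        hP.leftInverse_char_of_inner_inverse hf hu.1 hfuf i]
    have hTP : u '' (f '' P i) ⊆ P i :=
      (image_mono (hf.1 i).image_subset).trans himage.subset
    have hu_inj : Function.Injective u := Function.LeftInverse.injective hvu
    refine ⟨u '' (f '' P i), hTP, (bijOn_image_iff_forall_existsUnique hTP).mp ?_, ?_⟩
    · refine bijOn_image_of_rightInvOn ?_
      rintro _ ⟨x, -, rfl⟩
      exact hfuf x
    · exact mk_sdiff_image_of_image_eq hu_inj himage _
  · intro h
    choose T hTP hT hcard using h
    have hTbij i := (bijOn_image_iff_forall_existsUnique (hTP i)).mpr (hT i)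
    choose e he using fun i => (hTbij i).exists_equiv_extend (hTP i) (hf.1 i) (hcard i)
    let σ := Equiv.ofBijective χf hf.2
    obtain ⟨π, hπ⟩ := hP.exists_equiv_apply_eq hP σ e
    refine ⟨π.symm, hP.isUnitB_symm π σ fun i x hx => hπ i x hx ▸ (e i _).2, fun x => ?_⟩
    obtain ⟨i, hx⟩ := hP.2.2 x
    obtain ⟨t, ht, hft⟩ := (hTbij i).surjOn (mem_image_of_mem f hx)
    have hπt : π t = f x := (hπ i t (hTP i ht)).trans ((he i t ht).trans hft)
    calc f (π.symm (f x)) = f t := by rw [← hπt, π.symm_apply_apply]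
      _ = f x := hft

/-- `f ∈ B(X,P)` is unit-regular iff for every `i` there is a transversal `T` of the
kernel of `f` restricted to `P i` with `|P i \ T| = |P (χf i) \ f '' (P i)|`. -/
theorem unit_regular_element_iff {X I : Type*} [Nonempty X] (P : I → Set X)
    (hP : IsPartition P) (f : X → X) (χf : I → I) (hf : MemB P f χf) :
    (∃ u, IsUnitB P u ∧ ∀ x, f (u (f x)) = f x) ↔
      ∀ i, ∃ T : Set X, T ⊆ P i ∧ (∀ x ∈ P i, ∃! t, t ∈ T ∧ f t = f x) ∧
        Cardinal.mk ↥(P i \ T) = Cardinal.mk ↥(P (χf i) \ f '' (P i)) :=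
  unit_regular_element_iff_general P hP f χf hf
end

section
/- Let f, g be in B(X,P). Then there exists h in B(X,P) with f = hg (i.e. f(x) = g(h(x)) for all x in X) if and only if there exists a bijection alpha : I -> I such that f(X_i) is contained in g(X_{alpha(i)}) for all i in I. -/
/-!
One direction takes `α` to be the character of `h`. Conversely, every point lies in exactly
one block `P i`, so `h x` can be chosen pointwise in `P (α i)` with `g (h x) = f x`.
-/

open Cardinal

namespace IsPartition

variable {X Y Z I J : Type*} {P : I → Set X}

theorem exists_mem_iff_eq (hP : IsPartition P) : ∃ ι : X → I, ∀ x i, x ∈ P i ↔ ι x = i := by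
  choose ι hι using hP.2.2
  refine ⟨ι, fun x i => ⟨fun hx => ?_, fun hi => hi ▸ hι x⟩⟩
  by_contra hne
  exact (hP.2.1 hne).le_bot ⟨hι x, hx⟩

theorem exists_mapsTo_of_image_subset (hP : IsPartition P) {Q : J → Set Y} {α : I → J}
    {f : X → Z} {g : Y → Z} (hfg : ∀ i, f '' P i ⊆ g '' Q (α i)) :
    ∃ h : X → Y, (∀ i, Set.MapsTo h (P i) (Q (α i))) ∧ ∀ x, f x = g (h x) := by
  obtain ⟨ι, hι⟩ := hP.exists_mem_iff_eq
  have hfx : ∀ x, ∃ y ∈ Q (α (ι x)), g y = f x := fun x =>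
    hfg (ι x) ⟨x, (hι x _).2 rfl, rfl⟩
  choose h hhQ hgh using hfx
  exact ⟨h, fun i x hx => (hι x i).1 hx ▸ hhQ x, fun x => (hgh x).symm⟩

end IsPartition

theorem L_le_iff_general {X I : Type*} (P : I → Set X) (hP : IsPartition P)
    (f g : X → X) :
    (∃ h χh, MemB P h χh ∧ ∀ x, f x = g (h x)) ↔
      ∃ α : I → I, Function.Bijective α ∧ ∀ i, f '' (P i) ⊆ g '' (P (α i)) := by
  constructor
  · rintro ⟨h, χh, ⟨hmaps, hχh⟩, hfgh⟩
    refine ⟨χh, hχh, fun i => ?_⟩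
    rw [show f = g ∘ h from funext hfgh, Set.image_comp]
    exact Set.image_mono (hmaps i).image_subset
  · rintro ⟨α, hα, hfg⟩
    obtain ⟨h, hmaps, hfgh⟩ := hP.exists_mapsTo_of_image_subset hfg
    exact ⟨h, α, ⟨hmaps, hα⟩, hfgh⟩

/-- `L_f ≤ L_g` in `B(X,P)` iff there is a bijection `α` of `I` with
`f '' (P i) ⊆ g '' (P (α i))` for all `i`. -/
theorem L_le_iff {X I : Type*} [Nonempty X] (P : I → Set X) (hP : IsPartition P)
    (f g : X → X) (χf χg : I → I) (hf : MemB P f χf) (hg : MemB P g χg) :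
    (∃ h χh, MemB P h χh ∧ ∀ x, f x = g (h x)) ↔
      ∃ α : I → I, Function.Bijective α ∧ ∀ i, f '' (P i) ⊆ g '' (P (α i)) :=
  L_le_iff_general P hP f g
end

section
/- Let f, g be in B(X,P). Then f and g are Green's L-related in B(X,P) (there exist h, h' in B(X,P) with f = hg and g = h'f, i.e. f(x) = g(h(x)) and g(x) = f(h'(x)) for all x) if and only if there exists a bijection alpha : I -> I such that f(X_i) = g(X_{alpha(i)}) for all i in I. -/
/-!
An `L`-class is determined by the images of the blocks. If `f = hg` and `g = h'f`, then
`f(X_i) ⊆ g(X_{χ_h i}) ⊆ f(X_{χ_{h'} χ_h i})`, and since `f ∈ B(X,P)` sends distinct blocks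
into distinct blocks, `χ_{h'} χ_h i = i`, so both inclusions are equalities. Conversely, if
`f(X_i) = g(X_{α i})`, choosing for each `x ∈ X_i` a preimage of `f x` under `g` inside
`X_{α i}` gives `h` with character `α`; `α⁻¹` gives `h'` in the same way.
-/

open Cardinal

/-- Green's `L` relation on `B(X,P)` (left-to-right composition: `f = hg` means
`f x = g (h x)`). -/
def GreenL {X I : Type*} (P : I → Set X) (f g : X → X) : Prop :=
  ∃ h χh h' χh', MemB P h χh ∧ MemB P h' χh' ∧
    (∀ x, f x = g (h x)) ∧ (∀ x, g x = f (h' x))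

/-- Green's `R` relation on `B(X,P)` (`f = gh` means `f x = h (g x)`). -/
def GreenR {X I : Type*} (P : I → Set X) (f g : X → X) : Prop :=
  ∃ h χh h' χh', MemB P h χh ∧ MemB P h' χh' ∧
    (∀ x, f x = h (g x)) ∧ (∀ x, g x = h' (f x))

/-- Green's `D` relation on `B(X,P)`. -/
def GreenD {X I : Type*} (P : I → Set X) (f g : X → X) : Prop :=
  ∃ k χk, MemB P k χk ∧ GreenL P f k ∧ GreenR P k g

/-- Green's `J` relation on `B(X,P)` (`f = h₁ g h₂` means `f x = h₂ (g (h₁ x))`). -/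
def GreenJ {X I : Type*} (P : I → Set X) (f g : X → X) : Prop :=
  (∃ h1 χ1 h2 χ2, MemB P h1 χ1 ∧ MemB P h2 χ2 ∧ ∀ x, f x = h2 (g (h1 x))) ∧
  (∃ h3 χ3 h4 χ4, MemB P h3 χ3 ∧ MemB P h4 χ4 ∧ ∀ x, g x = h4 (f (h3 x)))

section

variable {X I : Type*} {P : I → Set X}

theorem IsPartition.eq_of_mem_of_mem (hP : IsPartition P) {x : X} {i j : I}
    (hi : x ∈ P i) (hj : x ∈ P j) : i = j := by
  by_contra hij
  exact Set.disjoint_left.mp (hP.2.1 hij) hi hj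

theorem MemB.eq_of_image_subset {f : X → X} {χ : I → I} (hf : MemB P f χ)
    (hP : IsPartition P) {i k : I} (hik : f '' P i ⊆ f '' P k) : i = k := by
  obtain ⟨x, hx⟩ := hP.1 i
  obtain ⟨y, hy, hyx⟩ := hik (Set.mem_image_of_mem f hx)
  exact hf.2.1 <| hP.eq_of_mem_of_mem (hf.1 i hx) (hyx ▸ hf.1 k hy)

theorem image_subset_image_of_factor {f g h : X → X} (hfg : ∀ x, f x = g (h x))
    {s t : Set X} (hh : Set.MapsTo h s t) : f '' s ⊆ g '' t := by
  rintro _ ⟨x, hx, rfl⟩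
  exact ⟨h x, hh hx, (hfg x).symm⟩

theorem exists_factor_of_image_subset (hP : IsPartition P) {f g : X → X} (α : I → I)
    (hfg : ∀ i, f '' P i ⊆ g '' P (α i)) :
    ∃ h : X → X, (∀ i, Set.MapsTo h (P i) (P (α i))) ∧ ∀ x, f x = g (h x) := by
  choose idx hidx using hP.2.2
  have hpre : ∀ x, ∃ z ∈ P (α (idx x)), g z = f x :=
    fun x => hfg (idx x) (Set.mem_image_of_mem f (hidx x))
  choose h hh hgh using hpre
  refine ⟨h, fun i x hx => ?_, fun x => (hgh x).symm⟩
  rw [← hP.eq_of_mem_of_mem (hidx x) hx]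
  exact hh x

end

theorem L_iff_general {X I : Type*} (P : I → Set X) (hP : IsPartition P)
    (f g : X → X) (χf : I → I) (hf : MemB P f χf) :
    GreenL P f g ↔
      ∃ α : I → I, Function.Bijective α ∧ ∀ i, f '' (P i) = g '' (P (α i)) := by
  constructor
  · rintro ⟨h, χh, h', χh', hh, hh', hfg, hgf⟩
    refine ⟨χh, hh.2, fun i => ?_⟩
    have hfg_sub : f '' P i ⊆ g '' P (χh i) := image_subset_image_of_factor hfg (hh.1 i)
    have hgf_sub : g '' P (χh i) ⊆ f '' P (χh' (χh i)) :=
      image_subset_image_of_factor hgf (hh'.1 _)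
    have hret : χh' (χh i) = i := (hf.eq_of_image_subset hP (hfg_sub.trans hgf_sub)).symm
    rw [hret] at hgf_sub
    exact hfg_sub.antisymm hgf_sub
  · rintro ⟨α, hα, himg⟩
    let e := Equiv.ofBijective α hα
    obtain ⟨h, hh, hfg⟩ := exists_factor_of_image_subset hP α fun i => (himg i).subset
    obtain ⟨h', hh', hgf⟩ := exists_factor_of_image_subset hP (f := g) (g := f) e.symm
      fun i => by rw [himg (e.symm i), Equiv.ofBijective_apply_symm_apply α hα]
    exact ⟨h, α, h', e.symm, ⟨hh, hα⟩, ⟨hh', e.symm.bijective⟩, hfg, hgf⟩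

/-- `f L g` in `B(X,P)` iff there is a bijection `α` of `I` with
`f '' (P i) = g '' (P (α i))` for all `i`. -/
theorem L_iff {X I : Type*} [Nonempty X] (P : I → Set X) (hP : IsPartition P)
    (f g : X → X) (χf χg : I → I) (hf : MemB P f χf) (hg : MemB P g χg) :
    GreenL P f g ↔
      ∃ α : I → I, Function.Bijective α ∧ ∀ i, f '' (P i) = g '' (P (α i)) :=
  L_iff_general P hP f g χf hf
end

section
/- Let f, g be in B(X,P). Then f and g are Green's D-related in B(X,P) (there exists h in B(X,P) with f L h and h R g) if and only if there exists a bijection alpha : I -> I such that |f(X_i)| = |g(X_{alpha(i)})| (equality of cardinals) for all i in I. -/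
open Cardinal

/-!
In `B(X,P)`, `f L k` says exactly that the families of block images `f(X_i)` and `k(X_i)` agree
up to a permutation of `I`, while `k R g` forces `|k(A)| = |g(A)|` for every `A`; this gives one
direction. Conversely, bijections `f(X_i) ≃ g(X_{α i})` extend blockwise to maps
`s, t ∈ B(X,P)` inverse to each other on the images, and `k = t ∘ g` is then `R`-related to `g`
and has the same block images as `f`, up to `α`.
-/

open Set Function

section

variable {X I : Type*} {P : I → Set X} {f g k : X → X} {χ χf χg : I → I}

theorem Cardinal.exists_invOn_of_mk_eq {α : Type*} {s t : Set α} (h : #s = #t) :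
    ∃ u v : α → α, MapsTo u s t ∧ MapsTo v t s ∧ InvOn v u s t := by
  classical
  obtain ⟨e⟩ := Cardinal.eq.mp h
  refine ⟨fun x => if hx : x ∈ s then e ⟨x, hx⟩ else x,
    fun y => if hy : y ∈ t then e.symm ⟨y, hy⟩ else y,
    fun x hx => by simp [hx], fun y hy => by simp [hy], fun x hx => by simp [hx],
    fun y hy => by simp [hy]⟩

theorem MemB.image_subset (hf : MemB P f χ) (i : I) : f '' P i ⊆ P (χ i) :=
  (hf.1 i).image_subset

theorem MemB.comp {ψ : I → I} (hf : MemB P f χ) (hg : MemB P g ψ) :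
    MemB P (g ∘ f) (ψ ∘ χ) :=
  ⟨fun i => (hg.1 (χ i)).comp (hf.1 i), hg.2.comp hf.2⟩

namespace IndexedPartition

variable (hP : IndexedPartition P)
include hP

theorem memB_of_forall_mem (h : ∀ x, f x ∈ P (χ (hP.index x))) (hχ : Bijective χ) :
    MemB P f χ :=
  ⟨fun _ x hx => hP.mem_iff_index_eq.mp hx ▸ h x, hχ⟩

theorem exists_memB_eqOn {J : Type*} {π τ : J → I} (hπ : Bijective π) (hτ : Bijective τ)
    {S : J → Set X} {φ : J → X → X} (hS : ∀ j, S j ⊆ P (π j))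
    (hφ : ∀ j, MapsTo (φ j) (S j) (P (τ j))) :
    ∃ t χ, MemB P t χ ∧ ∀ j, EqOn t (φ j) (S j) := by
  classical
  let p := Equiv.ofBijective π hπ
  let t := hP.piecewise fun m =>
    (S (p.symm m)).piecewise (φ (p.symm m)) fun _ => hP.some (τ (p.symm m))
  refine ⟨t, τ ∘ p.symm, hP.memB_of_forall_mem (fun x => ?_) (hτ.comp p.symm.bijective),
    fun j x hx => ?_⟩
  · by_cases hx : x ∈ S (p.symm (hP.index x))
    · simpa [t, piecewise_apply, hx] using hφ _ hx
    · simp [t, piecewise_apply, hx]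
  · have hindex : hP.index x = π j := hP.mem_iff_index_eq.mp (hS j hx)
    have hj : p.symm (π j) = j := Equiv.ofBijective_symm_apply_apply π hπ j
    simp [t, piecewise_apply, hindex, hj, hx]

end IndexedPartition

theorem GreenR.mk_image_eq (hkg : GreenR P k g) (A : Set X) : #(k '' A) = #(g '' A) := by
  obtain ⟨t, -, t', -, -, -, hkt, hgt⟩ := hkg
  have hk : k = t ∘ g := funext hkt
  have hg : g = t' ∘ k := funext hgt
  exact le_antisymm (by rw [hk, image_comp]; exact mk_image_le)
    (by rw [hg, image_comp]; exact mk_image_le)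

theorem GreenL.of_image_eq (hP : IndexedPartition P) {β : I → I} (hβ : Bijective β)
    (himg : ∀ i, f '' P i = k '' P (β i)) : GreenL P f k := by
  let b := Equiv.ofBijective β hβ
  have hpre : ∀ x, f x ∈ k '' P (β (hP.index x)) := fun x =>
    himg _ ▸ mem_image_of_mem f (hP.mem_index x)
  have hpre' : ∀ x, k x ∈ f '' P (b.symm (hP.index x)) := fun x => by
    rw [himg, Equiv.ofBijective_apply_symm_apply β hβ]
    exact mem_image_of_mem k (hP.mem_index x)
  choose h hh hkh using hpre
  choose h' hh' hfh' using hpre'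
  exact ⟨h, β, h', b.symm, hP.memB_of_forall_mem hh hβ,
    hP.memB_of_forall_mem hh' b.symm.bijective, fun x => (hkh x).symm, fun x => (hfh' x).symm⟩

theorem GreenL.exists_image_eq (hP : IndexedPartition P) (hf : MemB P f χ)
    (hfk : GreenL P f k) :
    ∃ β, Bijective β ∧ ∀ i, f '' P i = k '' P (β i) := by
  obtain ⟨h, χh, h', χh', hh, hh', hkh, hfh'⟩ := hfk
  have hinv : ∀ i, χh' (χh i) = i := fun i => by
    -- `x ↦ f (h' (h x))` is `f` again, and `χ` is injective.
    have hx := hP.some_mem i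
    have hmem : f (hP.some i) ∈ P (χ (χh' (χh i))) := by
      rw [hkh, hfh']
      exact hf.1 _ (hh'.1 _ (hh.1 _ hx))
    exact hf.2.1 (hP.eq_of_mem hmem (hf.1 i hx))
  refine ⟨χh, hh.2, fun i => Subset.antisymm ?_ ?_⟩
  · rintro _ ⟨x, hx, rfl⟩
    exact ⟨h x, hh.1 i hx, (hkh x).symm⟩
  · rintro _ ⟨z, hz, rfl⟩
    exact ⟨h' z, hinv i ▸ hh'.1 _ hz, (hfh' z).symm⟩

theorem exists_greenR_image_eq (hP : IndexedPartition P) (hf : MemB P f χf)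
    (hg : MemB P g χg) {α : I → I} (hα : Bijective α)
    (hcard : ∀ i, #(f '' P i) = #(g '' P (α i))) :
    ∃ k χk, MemB P k χk ∧ GreenR P k g ∧ ∀ i, f '' P i = k '' P (α i) := by
  choose u v hu hv huv using fun i => Cardinal.exists_invOn_of_mk_eq (hcard i)
  obtain ⟨s, χs, hs, hsu⟩ := hP.exists_memB_eqOn hf.2 (hg.2.comp hα) hf.image_subset
    fun i => (hu i).mono_right (hg.image_subset (α i))
  obtain ⟨t, χt, ht, htv⟩ := hP.exists_memB_eqOn (hg.2.comp hα) hf.2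
    (fun i => hg.image_subset (α i)) fun i => (hv i).mono_right (hf.image_subset i)
  have hst : ∀ x, s (t (g x)) = g x := fun x => by
    obtain ⟨i, hi⟩ := hα.2 (hP.index x)
    have hx : g x ∈ g '' P (α i) := mem_image_of_mem g (hi ▸ hP.mem_index x)
    rw [htv i hx, hsu i (hv i hx), (huv i).2 hx]
  refine ⟨t ∘ g, χt ∘ χg, hg.comp ht,
    ⟨t, χt, s, χs, ht, hs, fun _ => rfl, fun x => (hst x).symm⟩, fun i => ?_⟩
  rw [image_comp, (htv i).image_eq, ((huv i).symm.bijOn (hv i) (hu i)).image_eq]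

end

theorem D_iff_general {X I : Type*} (P : I → Set X) (hP : IsPartition P)
    (f g : X → X) (χf χg : I → I) (hf : MemB P f χf) (hg : MemB P g χg) :
    GreenD P f g ↔
      ∃ α : I → I, Function.Bijective α ∧
        ∀ i, Cardinal.mk ↥(f '' (P i)) = Cardinal.mk ↥(g '' (P (α i))) := by
  have hP' := IndexedPartition.mk' P hP.2.1 hP.1 hP.2.2
  constructor
  · rintro ⟨k, -, -, hfk, hkg⟩
    obtain ⟨β, hβ, himg⟩ := hfk.exists_image_eq hP' hf
    exact ⟨β, hβ, fun i => himg i ▸ hkg.mk_image_eq _⟩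
  · rintro ⟨α, hα, hcard⟩
    obtain ⟨k, χk, hk, hkg, himg⟩ := exists_greenR_image_eq hP' hf hg hα hcard
    exact ⟨k, χk, hk, GreenL.of_image_eq hP' hα himg, hkg⟩

/-- `f D g` in `B(X,P)` iff there is a bijection `α` of `I` with
`|f '' (P i)| = |g '' (P (α i))|` for all `i`. -/
theorem D_iff {X I : Type*} [Nonempty X] (P : I → Set X) (hP : IsPartition P)
    (f g : X → X) (χf χg : I → I) (hf : MemB P f χf) (hg : MemB P g χg) :
    GreenD P f g ↔
      ∃ α : I → I, Function.Bijective α ∧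
        ∀ i, Cardinal.mk ↥(f '' (P i)) = Cardinal.mk ↥(g '' (P (α i))) :=
  D_iff_general P hP f g χf χg hf hg
end

section
/- Let f, g be in B(X,P). Then there exist h, h' in B(X,P) with f = hgh' (i.e. f(x) = h'(g(h(x))) for all x in X) if and only if there exists a bijection alpha : I -> I such that |f(X_i)| <= |g(X_{alpha(i)})| (as cardinals) for all i in I. -/
open Cardinal

/-! If `f = h g h'`, then `f(X_i)` is an image of `g(X_{χ_h i})`, so `α = χ_h` works.
Conversely, an embedding `φ_i : f(X_i) ↪ g(X_{α i})` factors `f` through `g` on each block: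
`h` sends `x ∈ X_i` to a `g`-preimage in `X_{α i}` of `φ_i (f x)`, and `h'` inverts `φ_i` on
`X_{χ_g (α i)}`. Gluing these blockwise maps along the partition gives elements of `B(X,P)`
with characters `α` and `χ_f ∘ (χ_g ∘ α)⁻¹`. -/

open Set Function

universe w

theorem mk_image_le_mk_image_of_eq_comp {α β : Type*} {γ δ : Type w} {f : α → γ} {g : β → δ}
    {h : α → β} {h' : δ → γ} {s : Set α} {t : Set β} (hh : MapsTo h s t)
    (hf : ∀ x, f x = h' (g (h x))) : #(f '' s) ≤ #(g '' t) := by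
  have hsub : f '' s ⊆ h' '' (g '' t) := by
    rintro _ ⟨x, hx, rfl⟩
    exact ⟨g (h x), mem_image_of_mem g (hh hx), (hf x).symm⟩
  exact (mk_le_mk_of_subset hsub).trans mk_image_le

theorem exists_factor_of_mk_image_le {α β : Type*} {γ δ : Type w} {f : α → γ} {g : β → δ}
    {s : Set α} {t : Set β} (hs : s.Nonempty) (hle : #(f '' s) ≤ #(g '' t)) :
    ∃ (u : α → β) (v : δ → γ), MapsTo u s t ∧ (∀ y, v y ∈ f '' s) ∧
      ∀ x ∈ s, v (g (u x)) = f x := by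
  classical
  obtain ⟨φ⟩ := (le_def _ _).mp hle
  have : Nonempty (f '' s) := (hs.image f).to_subtype
  have hlift : ∀ y : f '' s, ∃ z ∈ t, g z = φ y := fun y => (φ y).2
  choose lift hlift_mem hlift_eq using hlift
  obtain ⟨x₀, hx₀⟩ := hs
  let u : α → β := fun x =>
    if hx : x ∈ s then lift ⟨f x, mem_image_of_mem f hx⟩ else lift ⟨f x₀, mem_image_of_mem f hx₀⟩
  let v : δ → γ := fun y => if hy : y ∈ g '' t then (invFun φ ⟨y, hy⟩ : f '' s) else f x₀
  refine ⟨u, v, fun x hx => ?_, fun y => ?_, fun x hx => ?_⟩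
  · simp only [u, dif_pos hx]
    exact hlift_mem _
  · simp only [v]
    split_ifs
    exacts [(invFun φ _).2, mem_image_of_mem f hx₀]
  · have hgu : g (u x) = φ ⟨f x, mem_image_of_mem f hx⟩ := by
      simp only [u, dif_pos hx, hlift_eq]
    have hmem : g (u x) ∈ g '' t := hgu ▸ (φ _).2
    simp only [v, dif_pos hmem]
    have : (⟨g (u x), hmem⟩ : g '' t) = φ ⟨f x, mem_image_of_mem f hx⟩ := Subtype.ext hgu
    rw [this, leftInverse_invFun φ.injective]

theorem IndexedPartition.memB_piecewise {X I : Type*} {P : I → Set X} (hs : IndexedPartition P)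
    {u : I → X → X} {σ : I → I} (hu : ∀ i, MapsTo (u i) (P i) (P (σ i)))
    (hσ : Bijective σ) : MemB P (hs.piecewise u) σ := by
  refine ⟨fun i x hx => ?_, hσ⟩
  rw [hs.piecewise_apply, hs.mem_iff_index_eq.mp hx]
  exact hu i hx

theorem J_le_iff_general {X I : Type*} (P : I → Set X) (hP : IsPartition P)
    (f g : X → X) (χf χg : I → I) (hf : MemB P f χf) (hg : MemB P g χg) :
    (∃ h χh h' χh', MemB P h χh ∧ MemB P h' χh' ∧ ∀ x, f x = h' (g (h x))) ↔
      ∃ α : I → I, Function.Bijective α ∧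
        ∀ i, Cardinal.mk ↥(f '' (P i)) ≤ Cardinal.mk ↥(g '' (P (α i))) := by
  constructor
  · rintro ⟨h, χh, h', χh', ⟨hh, hχh⟩, -, hfac⟩
    exact ⟨χh, hχh, fun i => mk_image_le_mk_image_of_eq_comp (hh i) hfac⟩
  · rintro ⟨α, hα, hle⟩
    let hs := IndexedPartition.mk' P hP.2.1 hP.1 hP.2.2
    choose u v hu hv huv using fun i => exists_factor_of_mk_image_le (hP.1 i) (hle i)
    let ι := (Equiv.ofBijective (χg ∘ α) (hg.2.comp hα)).symm
    have hι : ∀ i, ι (χg (α i)) = i := Equiv.ofBijective_symm_apply_apply _ _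
    refine ⟨hs.piecewise u, α, hs.piecewise (v ∘ ι), χf ∘ ι, hs.memB_piecewise hu hα,
      hs.memB_piecewise (fun j y _ => (hf.1 (ι j)).image_subset (hv (ι j) y))
        (hf.2.comp ι.bijective), fun x => ?_⟩
    have hhx : hs.piecewise u x ∈ P (α (hs.index x)) := hu _ (hs.mem_index x)
    have hghx : hs.index (g (hs.piecewise u x)) = χg (α (hs.index x)) :=
      hs.mem_iff_index_eq.mp (hg.1 _ hhx)
    simp only [hs.piecewise_apply, comp_apply] at hghx ⊢
    rw [hghx, hι, huv _ x (hs.mem_index x)]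

/-- `J_f ≤ J_g` in `B(X,P)` iff there is a bijection `α` of `I` with
`|f '' (P i)| ≤ |g '' (P (α i))|` for all `i`. -/
theorem J_le_iff {X I : Type*} [Nonempty X] (P : I → Set X) (hP : IsPartition P)
    (f g : X → X) (χf χg : I → I) (hf : MemB P f χf) (hg : MemB P g χg) :
    (∃ h χh h' χh', MemB P h χh ∧ MemB P h' χh' ∧ ∀ x, f x = h' (g (h x))) ↔
      ∃ α : I → I, Function.Bijective α ∧
        ∀ i, Cardinal.mk ↥(f '' (P i)) ≤ Cardinal.mk ↥(g '' (P (α i))) :=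
  J_le_iff_general P hP f g χf χg hf hg
end

section
/- If the set J = {i in I : |X_i| >= 3} is infinite, then Green's relations D and J do not coincide on B(X,P): there exist f, g in B(X,P) with f J g but not f D g. -/
/-!
Fix a `ℤ`-indexed sequence of distinct blocks, each with three marked points. For
`r : ℤ → Fin 3`, let `c r` retract the `n`-th of these blocks onto its first `r n + 1` marks and
every other block onto a point, so that `c r` has `r n + 1` image points on block `n`. Take
`f = c r` with image sizes `…, 1, 1, 2, 3, 3, …` (the `2` at block `0`) and `g = c s` with image
sizes `…, 1, 1, 1, 3, 3, …`. Since `s ≤ r` and `r ≤ s ∘ (· + 1)`, composing with block shifts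
gives `f J g`. If `f L k R g`, then `k` and `g` have the same kernel, while on the block to which
`f = hk` sends block `0`, `k` takes exactly the two values of `f` on block `0`; but `g` never has
exactly two image points on a block.
-/

open Cardinal

theorem GreenR.ncard_image_eq {X I : Type*} {P : I → Set X} {k g : X → X} (h : GreenR P k g)
    (S : Set X) : (k '' S).ncard = (g '' S).ncard := by
  obtain ⟨p, -, q, -, -, -, hk, hg⟩ := h
  have himage : k '' S = p '' (g '' S) := by
    rw [Set.image_image]; exact Set.image_congr fun x _ => hk x
  have hinj : Set.InjOn p (g '' S) := by
    rintro _ ⟨x, -, rfl⟩ _ ⟨y, -, rfl⟩ hxy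
    rw [hg x, hg y, hk x, hk y, hxy]
  rw [himage, hinj.ncard_image]

theorem not_greenD_of_ncard_image {X I : Type*} {P : I → Set X}
    (hP : Pairwise (Function.onFun Disjoint P)) {f g : X → X}
    (hf : ∀ i, Set.MapsTo f (P i) (P i)) {i₀ : I} (hf₀ : (f '' P i₀).ncard = 2)
    (hg : ∀ i, (g '' P i).ncard ≠ 2) : ¬ GreenD P f g := by
  rintro ⟨k, -, -, ⟨h, χh, h', χh', ⟨hh, -⟩, ⟨hh', -⟩, hfk, hkf⟩, hkg⟩
  set i₁ := χh i₀
  set i₂ := χh' i₁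
  have hf_sub : f '' P i₀ ⊆ k '' P i₁ := by
    rintro _ ⟨x, hx, rfl⟩
    exact ⟨h x, hh i₀ hx, (hfk x).symm⟩
  have hk_sub : k '' P i₁ ⊆ f '' P i₂ := by
    rintro _ ⟨x, hx, rfl⟩
    exact ⟨h' x, hh' i₁ hx, (hkf x).symm⟩
  obtain ⟨a, ha⟩ := Set.nonempty_of_ncard_ne_zero (by omega : (f '' P i₀).ncard ≠ 0)
  have hi₂ : i₂ = i₀ :=
    hP.eq <| Set.not_disjoint_iff.2
      ⟨a, (hf i₂).image_subset (hk_sub (hf_sub ha)), (hf i₀).image_subset ha⟩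
  have hk_eq : k '' P i₁ = f '' P i₀ := (hk_sub.trans (by rw [hi₂])).antisymm hf_sub
  exact hg i₁ (by rw [← hkg.ncard_image_eq, hk_eq, hf₀])

structure MarkedBlocks {X I : Type*} (P : I → Set X) (K : Type*) where
  blk : X → I
  mem_iff : ∀ x i, x ∈ P i ↔ blk x = i
  base : I → X
  base_mem : ∀ i, base i ∈ P i
  seq : K ↪ I
  mark : K → Fin 3 ↪ X
  mark_mem : ∀ n k, mark n k ∈ P (seq n)

namespace MarkedBlocks

open scoped Classical

variable {X I K : Type*} {P : I → Set X} (F : MarkedBlocks P K)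

noncomputable def level (n : K) (x : X) : Fin 3 :=
  if x = F.mark n 0 then 0 else if x = F.mark n 1 then 1 else 2

/-- On the `n`-th marked block, `F.collapse σ r` retracts onto the marks `0, …, r n` and moves
them to the same marks of block `σ n`; every other block goes to its base point. -/
noncomputable def collapse (σ : K → K) (r : K → Fin 3) (x : X) : X :=
  if h : F.blk x ∈ Set.range F.seq then
    let n := (Equiv.ofInjective F.seq F.seq.injective).symm ⟨F.blk x, h⟩
    F.mark (σ n) (min (r n) (F.level n x))
  else F.base (F.blk x)

noncomputable def chi (σ : Equiv.Perm K) : Equiv.Perm I :=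
  σ.extendDomain (Equiv.ofInjective F.seq F.seq.injective)

theorem pairwise_disjoint (F : MarkedBlocks P K) : Pairwise (Function.onFun Disjoint P) :=
  fun i i' hne => Set.disjoint_left.2 fun x hi hi' =>
    hne (((F.mem_iff x i).1 hi).symm.trans ((F.mem_iff x i').1 hi'))

theorem level_mark (n : K) (k : Fin 3) : F.level n (F.mark n k) = k := by
  fin_cases k <;> simp [level, (F.mark n).injective.eq_iff]

theorem collapse_of_mem {σ : K → K} {r : K → Fin 3} {n : K} {x : X} (hx : x ∈ P (F.seq n)) :
    F.collapse σ r x = F.mark (σ n) (min (r n) (F.level n x)) := by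
  have hblk : F.blk x = F.seq n := (F.mem_iff x _).1 hx
  simp [collapse, hblk]

theorem collapse_of_notMem {σ : K → K} {r : K → Fin 3} {i : I} (hi : i ∉ Set.range F.seq)
    {x : X} (hx : x ∈ P i) : F.collapse σ r x = F.base i := by
  have hblk : F.blk x = i := (F.mem_iff x _).1 hx
  simp [collapse, hblk, hi]

theorem collapse_collapse (σ τ : K → K) (r s : K → Fin 3) (x : X) :
    F.collapse σ r (F.collapse τ s x) =
      F.collapse (σ ∘ τ) (fun n => min (r (τ n)) (s n)) x := by
  by_cases hi : F.blk x ∈ Set.range F.seq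
  · obtain ⟨n, hn⟩ := hi
    have hx : x ∈ P (F.seq n) := (F.mem_iff x _).2 hn.symm
    rw [F.collapse_of_mem hx, F.collapse_of_mem (F.mark_mem _ _), F.level_mark,
      F.collapse_of_mem hx, min_assoc]
    rfl
  · have hx := (F.mem_iff x _).2 rfl
    rw [F.collapse_of_notMem hi hx, F.collapse_of_notMem hi (F.base_mem _),
      F.collapse_of_notMem hi hx]

theorem memB_collapse (σ : Equiv.Perm K) (r : K → Fin 3) :
    MemB P (F.collapse σ r) (F.chi σ) := by
  refine ⟨fun i x hx => ?_, (F.chi σ).bijective⟩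
  by_cases hi : i ∈ Set.range F.seq
  · obtain ⟨n, rfl⟩ := hi
    have hchi : F.chi σ (F.seq n) = F.seq (σ n) :=
      σ.extendDomain_apply_image (Equiv.ofInjective F.seq F.seq.injective) n
    rw [F.collapse_of_mem hx, hchi]
    exact F.mark_mem _ _
  · rw [F.collapse_of_notMem hi hx, chi, Equiv.Perm.extendDomain_apply_not_subtype _ _ hi]
    exact F.base_mem i

theorem memB_collapse_id (r : K → Fin 3) : MemB P (F.collapse id r) id := by
  simpa [chi] using F.memB_collapse 1 r

theorem image_collapse_id_seq (r : K → Fin 3) (n : K) :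
    F.collapse id r '' P (F.seq n) = F.mark n '' Set.Iic (r n) := by
  apply Set.Subset.antisymm
  · rintro _ ⟨x, hx, rfl⟩
    rw [F.collapse_of_mem hx]
    exact ⟨_, Set.mem_Iic.2 (min_le_left _ _), rfl⟩
  · rintro _ ⟨k, hk, rfl⟩
    refine ⟨F.mark n k, F.mark_mem n k, ?_⟩
    rw [F.collapse_of_mem (F.mark_mem n k), F.level_mark, min_eq_right hk]
    rfl

theorem ncard_image_collapse_id_seq (r : K → Fin 3) (n : K) :
    (F.collapse id r '' P (F.seq n)).ncard = (r n : ℕ) + 1 := by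
  rw [F.image_collapse_id_seq, Set.ncard_image_of_injective _ (F.mark n).injective,
    Set.ncard_eq_toFinset_card', Set.toFinset_Iic, Fin.card_Iic]

theorem ncard_image_collapse_id_of_notMem (r : K → Fin 3) {i : I} (hi : i ∉ Set.range F.seq) :
    (F.collapse id r '' P i).ncard = 1 := by
  rw [Set.image_congr fun x hx => F.collapse_of_notMem hi hx,
    (Set.nonempty_of_mem (F.base_mem i)).image_const, Set.ncard_singleton]

theorem exists_collapse_id_eq_comp {r s : K → Fin 3} (σ : Equiv.Perm K)
    (hrs : ∀ n, r n ≤ s (σ n)) :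
    ∃ h₁ χ₁ h₂ χ₂, MemB P h₁ χ₁ ∧ MemB P h₂ χ₂ ∧
      ∀ x, F.collapse id r x = h₂ (F.collapse id s (h₁ x)) := by
  refine ⟨F.collapse σ r, _, F.collapse σ.symm (fun _ => 2), _, F.memB_collapse σ r,
    F.memB_collapse σ.symm _, fun x => ?_⟩
  rw [F.collapse_collapse, F.collapse_collapse]
  congr 1
  · ext n; simp
  · funext n
    exact (min_eq_right (le_min (Fin.le_last _) (hrs n))).symm

theorem greenJ_collapse_id {r s : K → Fin 3} (σ τ : Equiv.Perm K)
    (hrs : ∀ n, r n ≤ s (σ n)) (hsr : ∀ n, s n ≤ r (τ n)) :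
    GreenJ P (F.collapse id r) (F.collapse id s) :=
  ⟨F.exists_collapse_id_eq_comp σ hrs, F.exists_collapse_id_eq_comp τ hsr⟩

theorem not_greenD_collapse_id {r s : K → Fin 3} {n : K} (hr : r n = 1) (hs : ∀ m, s m ≠ 1) :
    ¬ GreenD P (F.collapse id r) (F.collapse id s) := by
  refine not_greenD_of_ncard_image F.pairwise_disjoint (fun i => (F.memB_collapse_id r).1 i)
    (i₀ := F.seq n) (by rw [F.ncard_image_collapse_id_seq, hr]; rfl) fun i => ?_
  by_cases hi : i ∈ Set.range F.seq
  · obtain ⟨m, rfl⟩ := hi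
    rw [F.ncard_image_collapse_id_seq]
    have := hs m
    omega
  · rw [F.ncard_image_collapse_id_of_notMem s hi]
    omega

end MarkedBlocks

theorem IsPartition.nonempty_markedBlocks {X I : Type*} {P : I → Set X} (hP : IsPartition P)
    (K : Type*) [Countable K] (hJ : {i : I | 3 ≤ #(P i)}.Infinite) :
    Nonempty (MarkedBlocks P K) := by
  obtain ⟨hne, hdisj, hcover⟩ := hP
  choose blk hblk using hcover
  choose base hbase using hne
  obtain ⟨e, he⟩ := Countable.exists_injective_nat K
  let seq : K ↪ I := ⟨fun n => hJ.natEmbedding _ (e n),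
    fun a b hab => he ((hJ.natEmbedding _).injective (Subtype.ext hab))⟩
  have hmark : ∀ n, ∃ m : Fin 3 ↪ X, ∀ k, m k ∈ P (seq n) := by
    intro n
    obtain ⟨m⟩ : Nonempty (Fin 3 ↪ P (seq n)) := by
      rw [← lift_mk_le', mk_fin, lift_natCast, nat_le_lift_iff]
      exact (hJ.natEmbedding _ (e n)).2
    exact ⟨m.trans (Function.Embedding.subtype _), fun k => (m k).2⟩
  choose mark hmark using hmark
  have hmem : ∀ x i, x ∈ P i ↔ blk x = i := fun x i =>
    ⟨fun hx => hdisj.eq (Set.not_disjoint_iff.2 ⟨x, hblk x, hx⟩), fun h => h ▸ hblk x⟩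
  exact ⟨⟨blk, hmem, base, hbase, seq, mark, hmark⟩⟩

theorem D_ne_J_of_infinite_general {X I : Type*} (P : I → Set X)
    (hP : IsPartition P)
    (hJ : {i : I | 3 ≤ Cardinal.mk ↥(P i)}.Infinite) :
    ∃ f χf g χg, MemB P f χf ∧ MemB P g χg ∧ GreenJ P f g ∧ ¬ GreenD P f g := by
  obtain ⟨F⟩ := hP.nonempty_markedBlocks ℤ hJ
  let r : ℤ → Fin 3 := fun n => if n < 0 then 0 else if n = 0 then 1 else 2
  let s : ℤ → Fin 3 := fun n => if n ≤ 0 then 0 else 2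
  have hrs : ∀ n, r n ≤ s (Equiv.addRight 1 n) := by
    intro n; simp only [r, s, Equiv.coe_addRight]; split_ifs <;> first | decide | omega
  have hsr : ∀ n, s n ≤ r ((1 : Equiv.Perm ℤ) n) := by
    intro n; simp only [r, s, Equiv.Perm.coe_one, id]; split_ifs <;> first | decide | omega
  have hs : ∀ n, s n ≠ 1 := by
    intro n; simp only [s]; split_ifs <;> decide
  exact ⟨F.collapse id r, id, F.collapse id s, id, F.memB_collapse_id r, F.memB_collapse_id s,
    F.greenJ_collapse_id _ _ hrs hsr, F.not_greenD_collapse_id (n := 0) rfl hs⟩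

/-- If infinitely many blocks of `P` have at least three elements, then `D ≠ J`
on `B(X,P)`. -/
theorem D_ne_J_of_infinite {X I : Type*} [Nonempty X] (P : I → Set X)
    (hP : IsPartition P)
    (hJ : {i : I | 3 ≤ Cardinal.mk ↥(P i)}.Infinite) :
    ∃ f χf g χg, MemB P f χf ∧ MemB P g χg ∧ GreenJ P f g ∧ ¬ GreenD P f g :=
  D_ne_J_of_infinite_general P hP hJ
end
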